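/- arXiv:2505.06059 — 4 statements merged into one kernel-verified Lean document; each statement's English description precedes it below -/
import Mathlib

section
/- Let F and G be endofunctors of a category 𝒞 and μ : F ⟶ G a natural transformation. Suppose the forgetful functor U : Alg^G ⥤ 𝒞 from G-algebras has a left adjoint Fr (with unit η and counit ε), and that Alg^G has coequalizers. Then the pullback functor μ^* : Alg^G ⥤ Alg^F has a left adjoint μ_!, whose value at an F-algebra (A, α) is the coequalizer in Alg^G of the two morphisms Fr(α) and f̃ : Fr(F A) ⟶ Fr(A), where f̃ is the adjunct under Fr ⊣ U of the composite f = α_{Fr A} ∘ G(η_A) ∘ μ_A : F A ⟶ U(Fr A) (with α_{Fr A} : G(U(Fr A)) ⟶ U(Fr A) the structure map of the free G-algebra Fr A). -/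
/-!
Under `Fr ⊣ U`, a morphism of `G`-algebras `h : Fr A ⟶ B` corresponds to `k : A ⟶ B` in `𝒞`, and
`f̃` is built so that `f̃ ≫ h` corresponds to `μ_A ≫ G k ≫ β = F k ≫ β ∘ μ_B`, while
`Fr(α) ≫ h` corresponds to `α ≫ k`. So `h` coequalizes `Fr(α)` and `f̃` exactly when `k` is an
`F`-algebra morphism `(A, α) ⟶ μ^*(B, β)`: morphisms out of the coequalizer are in natural
bijection with `(A, α) ⟶ μ^*(B, β)`, and this bijection determines the left adjoint.
-/

open CategoryTheory Limits

universe v u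

namespace PaperStmt

variable {C : Type u} [Category.{v} C]

/-- The pullback of a `G`-algebra along a natural transformation `μ : F ⟶ G`:
it sends `(B, β)` to `(B, β ∘ μ_B)` and is the identity on morphisms. -/
@[simps]
def pullbackAlg {F G : C ⥤ C} (μ : F ⟶ G) :
    Endofunctor.Algebra G ⥤ Endofunctor.Algebra F where
  obj B := ⟨B.a, μ.app B.a ≫ B.str⟩
  map {A B} g := { f := g.f, h := by simp }

def _root_.CategoryTheory.Endofunctor.Algebra.homEquivSubtype {F : C ⥤ C}
    (A B : Endofunctor.Algebra F) :
    (A ⟶ B) ≃ { f : A.a ⟶ B.a // F.map f ≫ B.str = A.str ≫ f } where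
  toFun g := ⟨g.f, g.h⟩
  invFun f := ⟨f.1, f.2⟩

section

variable {F G : C ⥤ C} (μ : F ⟶ G) {Fr : C ⥤ Endofunctor.Algebra G}
  (adj : Fr ⊣ Endofunctor.Algebra.forget G)

/-- The morphism `f̃ : Fr (F X) ⟶ Fr X` of the statement. -/
def freeStrAdjunct (X : C) : Fr.obj (F.obj X) ⟶ Fr.obj X :=
  (adj.homEquiv _ _).symm (μ.app X ≫ G.map (adj.unit.app X) ≫ (Fr.obj X).str)

lemma homEquiv_freeStrAdjunct_comp (X : C) {B : Endofunctor.Algebra G} (h : Fr.obj X ⟶ B) :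
    adj.homEquiv _ B (freeStrAdjunct μ adj X ≫ h) =
      μ.app X ≫ G.map (adj.homEquiv X B h) ≫ B.str := by
  rw [Adjunction.homEquiv_naturality_right, freeStrAdjunct, Equiv.apply_symm_apply,
    Adjunction.homEquiv_unit]
  simp [Endofunctor.Algebra.forget]

lemma map_str_comp_eq_freeStrAdjunct_comp_iff (A : Endofunctor.Algebra F)
    {B : Endofunctor.Algebra G} (h : Fr.obj A.a ⟶ B) :
    Fr.map A.str ≫ h = freeStrAdjunct μ adj A.a ≫ h ↔
      F.map (adj.homEquiv A.a B h) ≫ ((pullbackAlg μ).obj B).str =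
        A.str ≫ adj.homEquiv A.a B h := by
  rw [← (adj.homEquiv _ B).apply_eq_iff_eq, Adjunction.homEquiv_naturality_left,
    homEquiv_freeStrAdjunct_comp, pullbackAlg_obj_str]
  erw [μ.naturality_assoc]
  exact eq_comm

variable [HasCoequalizers (Endofunctor.Algebra G)]

noncomputable def coequalizerHomEquiv (A : Endofunctor.Algebra F) (B : Endofunctor.Algebra G) :
    (coequalizer (Fr.map A.str) (freeStrAdjunct μ adj A.a) ⟶ B) ≃
      (A ⟶ (pullbackAlg μ).obj B) :=
  (Cofork.IsColimit.homIso (coequalizerIsCoequalizer _ _) B).trans <|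
    ((adj.homEquiv A.a B).subtypeEquiv (map_str_comp_eq_freeStrAdjunct_comp_iff μ adj A)).trans
      (Endofunctor.Algebra.homEquivSubtype A ((pullbackAlg μ).obj B)).symm

lemma coequalizerHomEquiv_comp (A : Endofunctor.Algebra F) {B B' : Endofunctor.Algebra G}
    (g : B ⟶ B') (t : coequalizer (Fr.map A.str) (freeStrAdjunct μ adj A.a) ⟶ B) :
    coequalizerHomEquiv μ adj A B' (t ≫ g) =
      coequalizerHomEquiv μ adj A B t ≫ (pullbackAlg μ).map g := by
  ext
  change adj.homEquiv A.a B' (coequalizer.π _ _ ≫ t ≫ g) =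
    adj.homEquiv A.a B (coequalizer.π _ _ ≫ t) ≫ g.f
  rw [← Category.assoc, Adjunction.homEquiv_naturality_right]
  rfl

end

/-- If the forgetful functor from `G`-algebras has a left adjoint `Fr`
and `Alg^G` has coequalizers, then the pullback functor `μ^* : Alg^G ⥤ Alg^F` has a left
adjoint `μ_!` whose value at `(A, α)` is the coequalizer of `Fr(α)` and `f̃`, the adjunct of
`f = α_{Fr A} ∘ G(η_A) ∘ μ_A`. -/
theorem stmt0 {F G : C ⥤ C} (μ : F ⟶ G)
    (Fr : C ⥤ Endofunctor.Algebra G)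
    (adj0 : Fr ⊣ Endofunctor.Algebra.forget G)
    [HasCoequalizers (Endofunctor.Algebra G)] :
    ∃ (L : Endofunctor.Algebra F ⥤ Endofunctor.Algebra G)
      (_ : L ⊣ pullbackAlg μ),
      ∀ A : Endofunctor.Algebra F,
        Nonempty (L.obj A ≅
          coequalizer (Fr.map A.str)
            ((adj0.homEquiv (F.obj A.a) (Fr.obj A.a)).symm
              (μ.app A.a ≫ G.map (adj0.unit.app A.a) ≫ (Fr.obj A.a).str))) :=
  ⟨_, Adjunction.adjunctionOfEquivLeft (coequalizerHomEquiv μ adj0)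
      (fun A _ _ => coequalizerHomEquiv_comp μ adj0 A), fun _ => ⟨Iso.refl _⟩⟩

end PaperStmt
end

section
/- Let F and G be endofunctors of a category 𝒞 and μ : F ⟶ G a natural transformation, and suppose the forgetful functor U : Alg^G ⥤ 𝒞 has a left adjoint Fr with unit η and counit ε. Fix an F-algebra (A, α) and a G-algebra (B, β), and let f̃ : Fr(F A) ⟶ Fr(A) be the adjunct of f = α_{Fr A} ∘ G(η_A) ∘ μ_A : F A ⟶ U(Fr A). Then a morphism g : A ⟶ B in 𝒞 satisfies g ∘ α = (β ∘ μ_B) ∘ F(g) (i.e. g is an F-algebra morphism (A, α) ⟶ μ^*(B, β)) if and only if its adjunct g̃ = ε_B ∘ Fr(g) : Fr(A) ⟶ B satisfies g̃ ∘ Fr(α) = g̃ ∘ f̃. -/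
/-!
Both sides of the coequalizing equation are maps out of the free algebra `Fr (F A)`, so it holds
iff their transposes `F A ⟶ B` agree. The transpose of `Fr α ≫ g̃` is `α ≫ g`; that of `f̃ ≫ g̃` is
`f ≫ g̃`, and since `g̃` is a `G`-algebra map whose transpose is `g`, this equals
`μ_A ≫ G g ≫ β = F g ≫ μ_B ≫ β`.
-/

open CategoryTheory Limits

universe v u

namespace PaperStmt

variable {C : Type u} [Category.{v} C]

theorem _root_.CategoryTheory.Adjunction.map_comp_homEquiv_symm_eq_iff {D : Type*} [Category D]
    {L : C ⥤ D} {R : D ⥤ C} (adj : L ⊣ R) {X' X : C} {Y : D}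
    (a : X' ⟶ X) (f : X' ⟶ R.obj (L.obj X)) (g : X ⟶ R.obj Y) :
    L.map a ≫ (adj.homEquiv X Y).symm g =
        (adj.homEquiv X' (L.obj X)).symm f ≫ (adj.homEquiv X Y).symm g ↔
      a ≫ g = f ≫ R.map ((adj.homEquiv X Y).symm g) := by
  rw [← adj.homEquiv_naturality_left_symm, ← adj.homEquiv_naturality_right_symm,
    Equiv.apply_eq_iff_eq]

/- `(Fr ⋙ forget G).obj X` and `(Fr.obj X).a` agree only up to unfolding `forget`, which `rw`
does not do; hence the rewriting steps below are given as terms. -/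
theorem _root_.CategoryTheory.Adjunction.map_unit_comp_str_comp_homEquiv_symm {G : C ⥤ C}
    {Fr : C ⥤ Endofunctor.Algebra G} (adj : Fr ⊣ Endofunctor.Algebra.forget G)
    {X : C} {Y : Endofunctor.Algebra G} (g : X ⟶ Y.a) :
    G.map (adj.unit.app X) ≫ (Fr.obj X).str ≫ ((adj.homEquiv X Y).symm g).f =
      G.map g ≫ Y.str :=
  calc G.map (adj.unit.app X) ≫ (Fr.obj X).str ≫ ((adj.homEquiv X Y).symm g).f
      = G.map (adj.unit.app X) ≫ G.map ((adj.homEquiv X Y).symm g).f ≫ Y.str :=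
        congrArg (G.map (adj.unit.app X) ≫ ·) ((adj.homEquiv X Y).symm g).h.symm
    _ = G.map g ≫ Y.str :=
        (G.map_comp_assoc _ _ _).symm.trans (congrArg (G.map · ≫ Y.str)
          ((adj.homEquiv_unit _ _ _).symm.trans ((adj.homEquiv X Y).apply_symm_apply g)))

/-- Let `Fr ⊣ forget` be a free/forgetful adjunction for `G`-algebras,
`(A, α)` an `F`-algebra, `(B, β)` a `G`-algebra and
`f̃ : Fr (F A) ⟶ Fr A` the adjunct of `f = α_{Fr A} ∘ G(η_A) ∘ μ_A`.
Then `g : A ⟶ B` satisfies `g ∘ α = (β ∘ μ_B) ∘ F g` (i.e. it is an `F`-algebra morphism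
`(A, α) ⟶ μ^*(B, β)`) iff its adjunct `g̃ = ε_B ∘ Fr g` coequalizes `Fr α` and `f̃`. -/
theorem stmt1 {F G : C ⥤ C} (μ : F ⟶ G)
    (Fr : C ⥤ Endofunctor.Algebra G)
    (adj0 : Fr ⊣ Endofunctor.Algebra.forget G)
    (A : Endofunctor.Algebra F) (B : Endofunctor.Algebra G)
    (g : A.a ⟶ B.a) :
    A.str ≫ g = F.map g ≫ μ.app B.a ≫ B.str ↔
      Fr.map A.str ≫ (Fr.map g ≫ adj0.counit.app B) =
        ((adj0.homEquiv (F.obj A.a) (Fr.obj A.a)).symm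
            (μ.app A.a ≫ G.map (adj0.unit.app A.a) ≫ (Fr.obj A.a).str)) ≫
          (Fr.map g ≫ adj0.counit.app B) := by
  refine Iff.trans ?_ (adj0.map_comp_homEquiv_symm_eq_iff A.str _ g).symm
  have transpose_comp : (μ.app A.a ≫ G.map (adj0.unit.app A.a) ≫ (Fr.obj A.a).str) ≫
      (Endofunctor.Algebra.forget G).map ((adj0.homEquiv A.a B).symm g) =
        F.map g ≫ μ.app B.a ≫ B.str :=
    calc _ = μ.app A.a ≫ G.map (adj0.unit.app A.a) ≫ (Fr.obj A.a).str ≫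
          ((adj0.homEquiv A.a B).symm g).f :=
          (Category.assoc _ _ _).trans (congrArg (μ.app A.a ≫ ·) (Category.assoc _ _ _))
      _ = μ.app A.a ≫ G.map g ≫ B.str :=
          congrArg (μ.app A.a ≫ ·) (adj0.map_unit_comp_str_comp_homEquiv_symm g)
      _ = F.map g ≫ μ.app B.a ≫ B.str := (μ.naturality_assoc g B.str).symm
  exact Iff.of_eq (congrArg (A.str ≫ g = ·) transpose_comp.symm)

end PaperStmt
end

section
/- Work in the category of types with its cartesian monoidal structure. Let H X = Option (ℕ × X × X) be the lax monoidal endofunctor with ∇_{X,Y}(some (x, c_ℓ, c_r), some (y, a_ℓ, a_r)) = some (x + y, (c_ℓ, a_ℓ), (c_r, a_r)) and ∇_{X,Y}(v, w) = none otherwise, and η(⋆) = some (0, ⋆, ⋆). Let T be the initial H-algebra, i.e. the inductive type of finite binary trees with ℕ-labelled nodes (constructors empty : T and node : ℕ → T → T → T), and let T_∞ be the terminal H-coalgebra of possibly infinite such trees, with structure map unfold : T_∞ → Option (ℕ × T_∞ × T_∞). Then there exists exactly one H-measuring T_∞ × T → T from T to T by T_∞, namely the tree sum ⊕ : T_∞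 × T → T determined by: t ⊕ empty = empty; t ⊕ (node x' ℓ' r') = empty if unfold t = none; and t ⊕ (node x' ℓ' r') = node (x + x') (ℓ ⊕ ℓ') (r ⊕ r') if unfold t = some (x, ℓ, r). -/
namespace PaperStmt

/-- Finite binary trees with ℕ-labelled nodes (the initial algebra of
`H X = Option (ℕ × X × X)` on types). -/
inductive BTree : Type
  | empty : BTree
  | node : ℕ → BTree → BTree → BTree

/-- The initial `H`-algebra structure on `BTree`. -/
def tAlg : Option (ℕ × BTree × BTree) → BTree
  | none => .empty
  | some (x, l, r) => .node x l r

/-- The action of the endofunctor `H X = Option (ℕ × X × X)` on functions. -/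
def hMap {X Y : Type} (f : X → Y) : Option (ℕ × X × X) → Option (ℕ × Y × Y) :=
  Option.map fun p => (p.1, f p.2.1, f p.2.2)

/-- The lax monoidal structure map `∇_{X,Y} : H X × H Y → H (X × Y)`:
`(some (x, cₗ, cᵣ), some (y, aₗ, aᵣ)) ↦ some (x + y, (cₗ, aₗ), (cᵣ, aᵣ))`, else `none`. -/
def hNabla {X Y : Type} :
    Option (ℕ × X × X) → Option (ℕ × Y × Y) → Option (ℕ × (X × Y) × (X × Y))
  | some (x, cl, cr), some (y, al, ar) => some (x + y, (cl, al), (cr, ar))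
  | _, _ => none

/-- `φ : C × A → B` is an `H`-measuring from `(A, α)` to `(B, β)` by `(C, χ)`. -/
def IsHMeasuring {A B C : Type} (α : Option (ℕ × A × A) → A)
    (β : Option (ℕ × B × B) → B) (χ : C → Option (ℕ × C × C))
    (φ : C × A → B) : Prop :=
  ∀ (c : C) (v : Option (ℕ × A × A)), φ (c, α v) = β (hMap φ (hNabla (χ c) v))

/-- Tree sum, by recursion on the finite tree. -/
def phiAux {Tinf : Type} (unf : Tinf → Option (ℕ × Tinf × Tinf)) :
    BTree → Tinf → BTree
  | .empty, _ => .empty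
  | .node x' l' r', t =>
    match unf t with
    | none => .empty
    | some (x, l, r) => .node (x + x') (phiAux unf l' l) (phiAux unf r' r)

theorem phi_meas {Tinf : Type} (unf : Tinf → Option (ℕ × Tinf × Tinf)) :
    IsHMeasuring tAlg tAlg unf (fun p => phiAux unf p.2 p.1) := by
  intro c v
  rcases v with _ | ⟨x', l', r'⟩ <;>
    rcases h : unf c with _ | ⟨x, l, r⟩ <;>
      simp [tAlg, hMap, hNabla, phiAux, h]

theorem meas_eq {Tinf : Type} (unf : Tinf → Option (ℕ × Tinf × Tinf))
    (ψ : Tinf × BTree → BTree) (hψ : IsHMeasuring tAlg tAlg unf ψ) :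
    ∀ (b : BTree) (t : Tinf), ψ (t, b) = phiAux unf b t := by
  intro b
  induction b with
  | empty =>
    intro t
    have := hψ t none
    rcases h : unf t with _ | ⟨x, l, r⟩ <;>
      simpa [tAlg, hMap, hNabla, phiAux, h] using this
  | node x' l' r' ihl ihr =>
    intro t
    have := hψ t (some (x', l', r'))
    rcases h : unf t with _ | ⟨x, l, r⟩ <;>
      simp only [h, tAlg, hMap, hNabla, phiAux, Option.map] at this ⊢ <;>
      simp [this, ihl, ihr]

/-- Let `(T∞, unfold)` be the terminal `H`-coalgebra of possibly
infinite ℕ-labelled binary trees.  Then there is exactly one `H`-measuring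
`T∞ × T → T` from `T` to `T` by `T∞`, namely the tree sum `⊕` determined by
`t ⊕ empty = empty`, `t ⊕ node x' ℓ' r' = empty` if `unfold t = none`, and
`t ⊕ node x' ℓ' r' = node (x + x') (ℓ ⊕ ℓ') (r ⊕ r')` if `unfold t = some (x, ℓ, r)`. -/
theorem stmt18 (Tinf : Type) (unf : Tinf → Option (ℕ × Tinf × Tinf))
    (hterm : ∀ (C : Type) (χ : C → Option (ℕ × C × C)),
      ∃! f : C → Tinf, ∀ c : C, unf (f c) = hMap f (χ c)) :
    (∃! φ : Tinf × BTree → BTree, IsHMeasuring tAlg tAlg unf φ) ∧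
    ∀ φ : Tinf × BTree → BTree, IsHMeasuring tAlg tAlg unf φ →
      ((∀ t : Tinf, φ (t, .empty) = .empty) ∧
       (∀ (t : Tinf) (x' : ℕ) (l' r' : BTree), unf t = none →
          φ (t, .node x' l' r') = .empty) ∧
       (∀ (t : Tinf) (x' : ℕ) (l' r' : BTree) (x : ℕ) (l r : Tinf),
          unf t = some (x, l, r) →
          φ (t, .node x' l' r') = .node (x + x') (φ (l, l')) (φ (r, r')))) := by
  constructor
  · exact ⟨fun p => phiAux unf p.2 p.1, phi_meas unf,
      fun ψ hψ => funext fun p => meas_eq unf ψ hψ p.2 p.1⟩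
  · intro φ hφ
    refine ⟨fun t => ?_, fun t x' l' r' h => ?_, fun t x' l' r' x l r h => ?_⟩
    · have := hφ t none
      rcases h : unf t with _ | ⟨x, l, r⟩ <;>
        simpa [tAlg, hMap, hNabla, h] using this
    · simpa [tAlg, hMap, hNabla, h] using hφ t (some (x', l', r'))
    · simpa [tAlg, hMap, hNabla, h] using hφ t (some (x', l', r'))

end PaperStmt
end

section
/- Work in the category of types with its cartesian monoidal structure, fix n ∈ ℕ, and let G X = Option (ℕ × X) and H X = Option (ℕ × X × X) be the lax monoidal endofunctors with ∇^G(some (x, c), some (y, a)) = some (x + y, (c, a)), ∇^H(some (x, c_ℓ, c_r), some (y, a_ℓ, a_r)) = some (x + y, (c_ℓ, a_ℓ), (c_r, a_r)) (none otherwise in both cases), η^G(⋆) = some (0, ⋆), η^H(⋆) = some (0, ⋆, ⋆). Let μ : G ⟶ H be the monoidal natural transformation μ_X(some (x, c)) = some (x, c, c), μ_X(none) = none. Let ℕ*_n be the type of lists over ℕ of length at most n, a G-coalgebra via χ(nil) = none and χ(x :: l) = some (x, l), and let μ_*(ℕ*_n) be the pushforward H-coalgebra (ℕ*_n, μ ∘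 χ), so x :: l ↦ some (x, l, l). Let T_n be the type of finite ℕ-labelled binary trees of depth at most n, an H-algebra via α(none) = empty and α(some (x, ℓ, r)) = the tree node x ℓ r pruned to depth at most n (all nodes at depth exceeding n removed). Then T_n is μ_*(ℕ*_n)-initial: for every H-algebra (B, β) there exists exactly one H-measuring μ_*(ℕ*_n) × T_n → B. -/
namespace PaperStmt

/-- Lists over ℕ of length at most `n`. -/
def ListN (n : ℕ) : Type := { l : List ℕ // l.length ≤ n }

/-- The `G`-coalgebra structure on `ListN n` (for `G X = Option (ℕ × X)`):
`nil ↦ none` and `x :: l ↦ some (x, l)`. -/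
def listChi (n : ℕ) : ListN n → Option (ℕ × ListN n)
  | ⟨[], _⟩ => none
  | ⟨x :: l, hl⟩ => some (x, ⟨l, Nat.le_of_succ_le hl⟩)

/-- The pushforward `H`-coalgebra structure on `ListN n` along
`μ : G ⟶ H`, `μ_X (some (x, c)) = some (x, c, c)`: so `x :: l ↦ some (x, l, l)`. -/
def pushChi (n : ℕ) (c : ListN n) : Option (ℕ × ListN n × ListN n) :=
  Option.map (fun p => (p.1, p.2, p.2)) (listChi n c)

/-- Depth of a binary tree. -/
def depth : BTree → ℕ
  | .empty => 0
  | .node _ l r => max (depth l) (depth r) + 1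

/-- `prune k t` removes all nodes of `t` at depth exceeding `k`. -/
def prune : ℕ → BTree → BTree
  | 0, _ => .empty
  | _ + 1, .empty => .empty
  | k + 1, .node x l r => .node x (prune k l) (prune k r)

lemma depth_prune_le (k : ℕ) (t : BTree) : depth (prune k t) ≤ k := by
  induction k generalizing t with
  | zero => simp [prune, depth]
  | succ k ih =>
    cases t with
    | empty => simp [prune, depth]
    | node x l r =>
      simp only [prune, depth]
      exact Nat.succ_le_succ (max_le (ih l) (ih r))

/-- Binary trees of depth at most `n`. -/
def TreeN (n : ℕ) : Type := { t : BTree // depth t ≤ n }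

/-- The `H`-algebra structure on `TreeN n`: `none ↦ empty`, and `some (x, ℓ, r)` is sent
to the tree `node x ℓ r` pruned to depth at most `n`. -/
def treeAlg (n : ℕ) : Option (ℕ × TreeN n × TreeN n) → TreeN n
  | none => ⟨.empty, Nat.zero_le n⟩
  | some (x, l, r) => ⟨prune n (.node x l.val r.val), depth_prune_le n _⟩

/-!
A measuring `φ` is forced by recursion on the tree: the equation at `α none` fixes `φ (c, empty)`,
and, since `μ` duplicates the tail of the list, the equation at `node y ℓ r` expresses
`φ (x :: l, node y ℓ r)` through `φ (l, ℓ)` and `φ (l, r)`, while `φ ([], node _ _ _)` is `β none`.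
The recursion consumes one list entry per tree level, so for a list of length at most `n` it
never looks below depth `n`; this is why the pruning built into `treeAlg` is invisible to it.
-/

lemma prune_eq_of_depth_le : ∀ (k : ℕ) (t : BTree), depth t ≤ k → prune k t = t
  | 0, .empty, _ => rfl
  | _ + 1, .empty, _ => rfl
  | 0, .node _ _ _, h => by simp [depth] at h
  | k + 1, .node x l r, h => by
    simp only [depth, Nat.succ_le_succ_iff, max_le_iff] at h
    rw [prune, prune_eq_of_depth_le k l h.1, prune_eq_of_depth_le k r h.2]

@[simp]
lemma hNabla_none_left {X Y : Type} (v : Option (ℕ × Y × Y)) :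
    hNabla (none : Option (ℕ × X × X)) v = none := rfl

@[simp]
lemma hNabla_none_right {X Y : Type} (c : Option (ℕ × X × X)) :
    hNabla c (none : Option (ℕ × Y × Y)) = none := by
  rcases c with _ | ⟨_, _, _⟩ <;> rfl

@[simp]
lemma hMap_none {X Y : Type} (f : X → Y) : hMap f none = none := rfl

@[simp]
lemma pushChi_nil (n : ℕ) (h : [].length ≤ n) : pushChi n ⟨[], h⟩ = none := rfl

@[simp]
lemma pushChi_cons (n x : ℕ) (l : List ℕ) (h : (x :: l).length ≤ n) :
    pushChi n ⟨x :: l, h⟩ = some (x, ⟨l, Nat.le_of_succ_le h⟩, ⟨l, Nat.le_of_succ_le h⟩) := rfl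

lemma treeAlg_some_of_depth_le {n : ℕ} (y : ℕ) (l r : TreeN n)
    (h : depth (.node y l.val r.val) ≤ n) :
    treeAlg n (some (y, l, r)) = ⟨.node y l.val r.val, h⟩ :=
  Subtype.ext (prune_eq_of_depth_le n _ h)

def rawMeasuring {B : Type} (β : Option (ℕ × B × B) → B) : List ℕ → BTree → B
  | _, .empty => β none
  | [], .node _ _ _ => β none
  | x :: l, .node y tl tr => β (some (x + y, rawMeasuring β l tl, rawMeasuring β l tr))

@[simp]
lemma rawMeasuring_empty {B : Type} (β : Option (ℕ × B × B) → B) (l : List ℕ) :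
    rawMeasuring β l .empty = β none := by
  cases l <;> rfl

lemma rawMeasuring_prune {B : Type} (β : Option (ℕ × B × B) → B) :
    ∀ (l : List ℕ) (k : ℕ) (t : BTree), l.length ≤ k →
      rawMeasuring β l (prune k t) = rawMeasuring β l t
  | _, 0, .empty, _ | _, _ + 1, .empty, _ => rfl
  | [], 0, .node _ _ _, _ | [], _ + 1, .node _ _ _, _ => rfl
  | x :: l, k + 1, .node y tl tr, h => by
    have hl : l.length ≤ k := Nat.le_of_succ_le_succ h
    rw [prune, rawMeasuring, rawMeasuring, rawMeasuring_prune β l k tl hl,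
      rawMeasuring_prune β l k tr hl]

def treeMeasuring (n : ℕ) {B : Type} (β : Option (ℕ × B × B) → B) : ListN n × TreeN n → B :=
  fun p => rawMeasuring β p.1.val p.2.val

lemma isHMeasuring_treeMeasuring (n : ℕ) {B : Type} (β : Option (ℕ × B × B) → B) :
    IsHMeasuring (treeAlg n) β (pushChi n) (treeMeasuring n β) := by
  rintro ⟨_ | ⟨x, l⟩, hc⟩ (_ | ⟨y, tl, tr⟩)
  · simp [treeAlg, treeMeasuring]
  · simp only [treeMeasuring, treeAlg, pushChi_nil, hNabla_none_left, hMap, Option.map_none]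
    rw [rawMeasuring_prune β [] n _ (Nat.zero_le n), rawMeasuring]
  · simp [treeAlg, treeMeasuring]
  · simp only [treeMeasuring, treeAlg, pushChi_cons, hNabla, hMap, Option.map_some]
    rw [rawMeasuring_prune β _ n _ hc, rawMeasuring]

lemma eq_treeMeasuring_of_isHMeasuring {n : ℕ} {B : Type} {β : Option (ℕ × B × B) → B}
    {φ : ListN n × TreeN n → B} (hφ : IsHMeasuring (treeAlg n) β (pushChi n) φ) :
    φ = treeMeasuring n β := by
  funext ⟨c, t, ht⟩
  induction t generalizing c with
  | empty => simpa [treeAlg, treeMeasuring] using hφ c none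
  | node y tl tr ihl ihr =>
    have hd : max (depth tl) (depth tr) + 1 ≤ n := ht
    have htl : depth tl ≤ n := (le_max_left _ _).trans (Nat.le_of_succ_le hd)
    have htr : depth tr ≤ n := (le_max_right _ _).trans (Nat.le_of_succ_le hd)
    have hnode := hφ c (some (y, ⟨tl, htl⟩, ⟨tr, htr⟩))
    rw [treeAlg_some_of_depth_le y ⟨tl, htl⟩ ⟨tr, htr⟩ ht] at hnode
    rw [hnode]
    obtain ⟨_ | ⟨x, l⟩, hc⟩ := c
    · rfl
    · have hl : l.length ≤ n := Nat.le_of_succ_le hc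
      exact congrArg₂ (fun a b => β (some (x + y, a, b))) (ihl ⟨l, hl⟩ htl) (ihr ⟨l, hl⟩ htr)

/-- The `H`-algebra `T_n` of binary trees of depth at most `n` is
`μ_*(ℕ*_n)`-initial: for every `H`-algebra `(B, β)` there is exactly one `H`-measuring
`μ_*(ℕ*_n) × T_n → B`. -/
theorem stmt19 (n : ℕ) (B : Type) (β : Option (ℕ × B × B) → B) :
    ∃! φ : ListN n × TreeN n → B, IsHMeasuring (treeAlg n) β (pushChi n) φ :=
  ⟨treeMeasuring n β, isHMeasuring_treeMeasuring n β,
    fun _ hφ => eq_treeMeasuring_of_isHMeasuring hφ⟩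

end PaperStmt
end
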